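/- Let N be the normal-form translation on PDL_REwLA+ expressions (mapping each formula φ to a formula N(φ), and each term e to a pair (N₁(e), N₂(e)) of a formula and a term). Then in the Hilbert system H for PDL_REwLA+: (1) for every formula φ, ⊢_H N(φ) ↔ φ; (2) for every term e and every formula χ, ⊢_H [N₁(e)?]χ ↔ [e^{∩id}]χ; (3) for every term e and every formula χ, ⊢_H [N₂(e)]χ ↔ [e^{∩i̅d}]χ. -/
import Mathlib


/-! Statement 6: the normal-form translation `N` is provably correct in the Hilbert
system `H` for PDL_REwLA+. -/

/-- A generalized structure over term variables `A` and formula variables `P`,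
with universe `W`. -/
structure GStruct (A P W : Type) where
  U : W → W → Prop
  rel : A → W → W → Prop
  rel_sub : ∀ a x y, rel a x y → U x y
  val : P → W → Prop

/-- The universal relation is a finite linear order (on a nonempty finite universe). -/
def FinLin {A P W : Type} (S : GStruct A P W) : Prop :=
  Nonempty W ∧ Finite W ∧ (∀ x, S.U x x) ∧
    (∀ x y z, S.U x y → S.U y z → S.U x z) ∧
    (∀ x y, S.U x y → S.U y x → x = y) ∧ (∀ x y, S.U x y ∨ S.U y x)

/-- The universal relation is a finite strict linear order
(on a nonempty finite universe). -/
def SFinLin {A P W : Type} (S : GStruct A P W) : Prop :=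
  Nonempty W ∧ Finite W ∧ (∀ x, ¬ S.U x x) ∧
    (∀ x y z, S.U x y → S.U y z → S.U x z) ∧
    (∀ x y, x ≠ y → S.U x y ∨ S.U y x)
mutual
  /-- Formulas of PDL for REwLA+. -/
  inductive Fml (A P : Type) : Type where
    | pv : P → Fml A P
    | imp : Fml A P → Fml A P → Fml A P
    | fls : Fml A P
    | box : Trm A P → Fml A P → Fml A P
  /-- Terms of PDL for REwLA+. -/
  inductive Trm (A P : Type) : Type where
    | tv : A → Trm A P
    | comp : Trm A P → Trm A P → Trm A P
    | union : Trm A P → Trm A P → Trm A P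
    | plus : Trm A P → Trm A P
    | adom : Trm A P → Trm A P
    | capId : Trm A P → Trm A P
    | capNid : Trm A P → Trm A P
    | test : Fml A P → Trm A P
end

namespace Fml
/-- ¬φ := φ → F -/
def neg {A P : Type} (φ : Fml A P) : Fml A P := .imp φ .fls
/-- T := ¬F -/
def tru {A P : Type} : Fml A P := neg .fls
/-- φ ∨ ψ := ¬φ → ψ -/
def or {A P : Type} (φ ψ : Fml A P) : Fml A P := .imp (neg φ) ψ
/-- φ ∧ ψ := ¬(¬φ ∨ ¬ψ) -/
def and {A P : Type} (φ ψ : Fml A P) : Fml A P := neg (or (neg φ) (neg ψ))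
/-- φ ↔ ψ := (φ → ψ) ∧ (ψ → φ) -/
def iff {A P : Type} (φ ψ : Fml A P) : Fml A P := and (.imp φ ψ) (.imp ψ φ)
/-- ⟨e⟩φ := ¬[e]¬φ -/
def dia {A P : Type} (e : Trm A P) (φ : Fml A P) : Fml A P := neg (.box e (neg φ))
end Fml

mutual
  /-- Semantics of PDL_REwLA+ formulas on a generalized structure. -/
  def semF {A P W : Type} (S : GStruct A P W) : Fml A P → W → Prop
    | .pv p, x => S.val p x
    | .imp φ ψ, x => semF S φ x → semF S ψ x
    | .fls, _ => False
    | .box e φ, x => ∀ y, semT S e x y → semF S φ y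
  /-- Semantics of PDL_REwLA+ terms on a generalized structure. -/
  def semT {A P W : Type} (S : GStruct A P W) : Trm A P → W → W → Prop
    | .tv a, x, y => S.rel a x y
    | .comp e f, x, z => ∃ y, semT S e x y ∧ semT S f y z
    | .union e f, x, y => semT S e x y ∨ semT S f x y
    | .plus e, x, y => Relation.TransGen (fun u v => semT S e u v) x y
    | .adom e, x, y => x = y ∧ ∀ z, ¬ semT S e x z
    | .capId e, x, y => semT S e x y ∧ x = y
    | .capNid e, x, y => semT S e x y ∧ x ≠ y
    | .test φ, x, y => x = y ∧ semF S φ x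
end
mutual
  /-- Formulas of (pure) PDL with tests. -/
  inductive PFml (VA VP : Type) : Type where
    | pv : VP → PFml VA VP
    | imp : PFml VA VP → PFml VA VP → PFml VA VP
    | fls : PFml VA VP
    | box : PTrm VA VP → PFml VA VP → PFml VA VP
  /-- Terms of (pure) PDL with tests. -/
  inductive PTrm (VA VP : Type) : Type where
    | tv : VA → PTrm VA VP
    | comp : PTrm VA VP → PTrm VA VP → PTrm VA VP
    | union : PTrm VA VP → PTrm VA VP → PTrm VA VP
    | plus : PTrm VA VP → PTrm VA VP
    | test : PFml VA VP → PTrm VA VP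
end

mutual
  /-- Semantics of PDL formulas on a generalized structure. -/
  def psemF {VA VP W : Type} (S : GStruct VA VP W) : PFml VA VP → W → Prop
    | .pv p, x => S.val p x
    | .imp φ ψ, x => psemF S φ x → psemF S ψ x
    | .fls, _ => False
    | .box e φ, x => ∀ y, psemT S e x y → psemF S φ y
  /-- Semantics of PDL terms on a generalized structure. -/
  def psemT {VA VP W : Type} (S : GStruct VA VP W) : PTrm VA VP → W → W → Prop
    | .tv a, x, y => S.rel a x y
    | .comp e f, x, z => ∃ y, psemT S e x y ∧ psemT S f y z
    | .union e f, x, y => psemT S e x y ∨ psemT S f x y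
    | .plus e, x, y => Relation.TransGen (fun u v => psemT S e u v) x y
    | .test φ, x, y => x = y ∧ psemF S φ x
end

/-- Validity of a PDL formula on all structures (those with `U = W × W`). -/
def PValidREL {VA VP : Type} (φ : PFml VA VP) : Prop :=
  ∀ (W : Type) (S : GStruct VA VP W), Nonempty W → (∀ x y, S.U x y) →
    ∀ x, psemF S φ x

mutual
  /-- Substitution instance of a PDL formula, substituting PDL_REwLA+ terms for
  term variables and PDL_REwLA+ formulas for formula variables. -/
  def instF {VA VP A P : Type} (σt : VA → Trm A P) (σf : VP → Fml A P) :
      PFml VA VP → Fml A P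
    | .pv p => σf p
    | .imp φ ψ => .imp (instF σt σf φ) (instF σt σf ψ)
    | .fls => .fls
    | .box e φ => .box (instT σt σf e) (instF σt σf φ)
  /-- Substitution instance of a PDL term. -/
  def instT {VA VP A P : Type} (σt : VA → Trm A P) (σf : VP → Fml A P) :
      PTrm VA VP → Trm A P
    | .tv a => σt a
    | .comp e f => .comp (instT σt σf e) (instT σt σf f)
    | .union e f => .union (instT σt σf e) (instT σt σf f)
    | .plus e => .plus (instT σt σf e)
    | .test φ => .test (instF σt σf φ)
end
/-- The Hilbert system `H` for PDL_REwLA+ on finite linear orders. -/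
inductive HProof {A P : Type} : Fml A P → Prop where
  /-- modus ponens -/
  | mp {φ ψ : Fml A P} : HProof φ → HProof (.imp φ ψ) → HProof ψ
  /-- necessitation -/
  | nec {φ : Fml A P} (e : Trm A P) : HProof φ → HProof (.box e φ)
  /-- (PDL): all substitution-instances of PDL formulas valid on REL -/
  | pdl {VA VP : Type} (φ : PFml VA VP) (hval : PValidREL φ)
      (σt : VA → Trm A P) (σf : VP → Fml A P) : HProof (instF σt σf φ)
  /-- (a): [eᵃ]φ ↔ [([e]F)?]φ -/
  | adomAx (e : Trm A P) (φ : Fml A P) :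
      HProof (Fml.iff (.box (.adom e) φ) (.box (.test (.box e .fls)) φ))
  /-- (∩id-T) -/
  | capIdT (e : Trm A P) (φ : Fml A P) :
      HProof (Fml.iff (.box (.capId e) φ) (.box (.test (Fml.dia (.capId e) Fml.tru)) φ))
  /-- (∩id-;) -/
  | capIdComp (e f : Trm A P) (φ : Fml A P) :
      HProof (Fml.iff (.box (.capId (.comp e f)) φ) (.box (.comp (.capId e) (.capId f)) φ))
  /-- (∩id-+) -/
  | capIdUnion (e f : Trm A P) (φ : Fml A P) :
      HProof (Fml.iff (.box (.capId (.union e f)) φ) (.box (.union (.capId e) (.capId f)) φ))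
  /-- (∩id-⁺) -/
  | capIdPlus (e : Trm A P) (φ : Fml A P) :
      HProof (Fml.iff (.box (.capId (.plus e)) φ) (.box (.capId e) φ))
  /-- (∩id-a) -/
  | capIdAdom (e : Trm A P) (φ : Fml A P) :
      HProof (Fml.iff (.box (.capId (.adom e)) φ) (.box (.adom e) φ))
  /-- (∩id-∩id) -/
  | capIdCapId (e : Trm A P) (φ : Fml A P) :
      HProof (Fml.iff (.box (.capId (.capId e)) φ) (.box (.capId e) φ))
  /-- (∩id-∩i̅d) -/
  | capIdCapNid (e : Trm A P) (φ : Fml A P) :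
      HProof (Fml.iff (.box (.capId (.capNid e)) φ) Fml.tru)
  /-- (∩id-?) -/
  | capIdTest (ψ : Fml A P) (φ : Fml A P) :
      HProof (Fml.iff (.box (.capId (.test ψ)) φ) (.box (.test ψ) φ))
  /-- (∩id-+-∩i̅d): [e]φ ↔ [e^{∩id} + e^{∩i̅d}]φ -/
  | split (e : Trm A P) (φ : Fml A P) :
      HProof (Fml.iff (.box e φ) (.box (.union (.capId e) (.capNid e)) φ))
  /-- (∩i̅d-;) -/
  | capNidComp (e f : Trm A P) (φ : Fml A P) :
      HProof (Fml.iff (.box (.capNid (.comp e f)) φ)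
        (.box (.union (.union (.comp (.capNid e) (.capId f)) (.comp (.capId e) (.capNid f)))
          (.comp (.capNid e) (.capNid f))) φ))
  /-- (∩i̅d-+) -/
  | capNidUnion (e f : Trm A P) (φ : Fml A P) :
      HProof (Fml.iff (.box (.capNid (.union e f)) φ) (.box (.union (.capNid e) (.capNid f)) φ))
  /-- (∩i̅d-⁺) -/
  | capNidPlus (e : Trm A P) (φ : Fml A P) :
      HProof (Fml.iff (.box (.capNid (.plus e)) φ) (.box (.plus (.capNid e)) φ))
  /-- (∩i̅d-a) -/
  | capNidAdom (e : Trm A P) (φ : Fml A P) :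
      HProof (Fml.iff (.box (.capNid (.adom e)) φ) Fml.tru)
  /-- (∩i̅d-∩id) -/
  | capNidCapId (e : Trm A P) (φ : Fml A P) :
      HProof (Fml.iff (.box (.capNid (.capId e)) φ) Fml.tru)
  /-- (∩i̅d-∩i̅d) -/
  | capNidCapNid (e : Trm A P) (φ : Fml A P) :
      HProof (Fml.iff (.box (.capNid (.capNid e)) φ) (.box (.capNid e) φ))
  /-- (∩i̅d-?) -/
  | capNidTest (ψ : Fml A P) (φ : Fml A P) :
      HProof (Fml.iff (.box (.capNid (.test ψ)) φ) Fml.tru)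
  /-- (Löb-∩i̅d⁺) -/
  | loeb (e : Trm A P) (φ : Fml A P) :
      HProof (.imp (.box (.plus (.capNid e)) (.imp (.box (.plus (.capNid e)) φ) φ))
        (.box (.plus (.capNid e)) φ))

mutual
  /-- The normal-form translation on formulas. -/
  def NF {A P : Type} : Fml A P → Fml A P
    | .pv p => .pv p
    | .imp φ ψ => .imp (NF φ) (NF ψ)
    | .fls => .fls
    | .box e φ => Fml.and (.imp (N1 e) (NF φ)) (.box (N2 e) (NF φ))
  /-- The identity part of a term, as a formula. -/
  def N1 {A P : Type} : Trm A P → Fml A P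
    | .tv a => Fml.dia (.capId (.tv a)) Fml.tru
    | .comp e f => Fml.and (N1 e) (N1 f)
    | .union e f => Fml.or (N1 e) (N1 f)
    | .plus e => N1 e
    | .adom e => Fml.and (Fml.neg (N1 e)) (.box (N2 e) .fls)
    | .capId e => N1 e
    | .capNid _ => .fls
    | .test φ => NF φ
  /-- The identity-free part of a term. -/
  def N2 {A P : Type} : Trm A P → Trm A P
    | .tv a => .capNid (.tv a)
    | .comp e f =>
        .union (.union (.comp (N2 e) (.test (N1 f))) (.comp (.test (N1 e)) (N2 f)))
          (.comp (N2 e) (N2 f))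
    | .union e f => .union (N2 e) (N2 f)
    | .plus e => .plus (N2 e)
    | .adom _ => .test .fls
    | .capId _ => .test .fls
    | .capNid e => N2 e
    | .test _ => .test .fls
end

namespace PFml
def neg {VA VP : Type} (φ : PFml VA VP) : PFml VA VP := .imp φ .fls
def tru {VA VP : Type} : PFml VA VP := neg .fls
def or {VA VP : Type} (φ ψ : PFml VA VP) : PFml VA VP := .imp (neg φ) ψ
def and {VA VP : Type} (φ ψ : PFml VA VP) : PFml VA VP := neg (or (neg φ) (neg ψ))
def iff {VA VP : Type} (φ ψ : PFml VA VP) : PFml VA VP := and (.imp φ ψ) (.imp ψ φ)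
end PFml

section Sem
variable {VA VP W : Type} {S : GStruct VA VP W}

@[simp] lemma psem_pv (p : VP) (x : W) : psemF S (.pv p) x ↔ S.val p x := by simp [psemF]
@[simp] lemma psem_fls (x : W) : psemF S (.fls : PFml VA VP) x ↔ False := by simp [psemF]
@[simp] lemma psem_imp (φ ψ : PFml VA VP) (x : W) :
    psemF S (.imp φ ψ) x ↔ (psemF S φ x → psemF S ψ x) := by simp [psemF]
@[simp] lemma psem_box (e : PTrm VA VP) (φ : PFml VA VP) (x : W) :
    psemF S (.box e φ) x ↔ ∀ y, psemT S e x y → psemF S φ y := by simp [psemF]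
@[simp] lemma psem_neg (φ : PFml VA VP) (x : W) :
    psemF S (PFml.neg φ) x ↔ ¬ psemF S φ x := by simp [PFml.neg]
@[simp] lemma psem_or (φ ψ : PFml VA VP) (x : W) :
    psemF S (PFml.or φ ψ) x ↔ (psemF S φ x ∨ psemF S ψ x) := by
  simp only [PFml.or, psem_neg, psem_imp]
  tauto
@[simp] lemma psem_and (φ ψ : PFml VA VP) (x : W) :
    psemF S (PFml.and φ ψ) x ↔ (psemF S φ x ∧ psemF S ψ x) := by
  simp only [PFml.and, psem_or, psem_neg]
  tauto
@[simp] lemma psem_iff (φ ψ : PFml VA VP) (x : W) :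
    psemF S (PFml.iff φ ψ) x ↔ (psemF S φ x ↔ psemF S ψ x) := by
  simp only [PFml.iff, psem_and, psem_imp]
  tauto
@[simp] lemma psem_tru (x : W) : psemF S (PFml.tru : PFml VA VP) x ↔ True := by
  simp [PFml.tru]
@[simp] lemma psemT_tv (a : VA) (x y : W) : psemT S (.tv a) x y ↔ S.rel a x y := by simp [psemT]
@[simp] lemma psemT_comp (e f : PTrm VA VP) (x z : W) :
    psemT S (.comp e f) x z ↔ ∃ y, psemT S e x y ∧ psemT S f y z := by simp [psemT]
@[simp] lemma psemT_union (e f : PTrm VA VP) (x y : W) :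
    psemT S (.union e f) x y ↔ (psemT S e x y ∨ psemT S f x y) := by simp [psemT]
@[simp] lemma psemT_plus (e : PTrm VA VP) (x y : W) :
    psemT S (.plus e) x y ↔ Relation.TransGen (fun u v => psemT S e u v) x y := by simp [psemT]
@[simp] lemma psemT_test (φ : PFml VA VP) (x y : W) :
    psemT S (.test φ) x y ↔ (x = y ∧ psemF S φ x) := by simp [psemT]
end Sem

section InstSimp
variable {VA VP A P : Type} (σt : VA → Trm A P) (σf : VP → Fml A P)

@[simp] lemma instF_neg (φ : PFml VA VP) :
    instF σt σf (PFml.neg φ) = Fml.neg (instF σt σf φ) := by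
  simp [PFml.neg, PFml.tru, PFml.or, PFml.and, PFml.iff, Fml.neg, Fml.tru, Fml.or, Fml.and, Fml.iff, instF]
@[simp] lemma instF_tru : instF σt σf (PFml.tru : PFml VA VP) = Fml.tru := by
  simp [PFml.neg, PFml.tru, PFml.or, PFml.and, PFml.iff, Fml.neg, Fml.tru, Fml.or, Fml.and, Fml.iff, instF]
@[simp] lemma instF_or (φ ψ : PFml VA VP) :
    instF σt σf (PFml.or φ ψ) = Fml.or (instF σt σf φ) (instF σt σf ψ) := by
  simp [PFml.neg, PFml.tru, PFml.or, PFml.and, PFml.iff, Fml.neg, Fml.tru, Fml.or, Fml.and, Fml.iff, instF]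
@[simp] lemma instF_and (φ ψ : PFml VA VP) :
    instF σt σf (PFml.and φ ψ) = Fml.and (instF σt σf φ) (instF σt σf ψ) := by
  simp [PFml.neg, PFml.tru, PFml.or, PFml.and, PFml.iff, Fml.neg, Fml.tru, Fml.or, Fml.and, Fml.iff, instF]
@[simp] lemma instF_iff (φ ψ : PFml VA VP) :
    instF σt σf (PFml.iff φ ψ) = Fml.iff (instF σt σf φ) (instF σt σf ψ) := by
  simp [PFml.neg, PFml.tru, PFml.or, PFml.and, PFml.iff, Fml.neg, Fml.tru, Fml.or, Fml.and, Fml.iff, instF]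
@[simp] lemma instF_pv (p : VP) : instF σt σf (.pv p) = σf p := by simp [instF]
@[simp] lemma instF_fls : instF σt σf (.fls : PFml VA VP) = .fls := by simp [instF]
@[simp] lemma instF_imp (φ ψ : PFml VA VP) :
    instF σt σf (.imp φ ψ) = .imp (instF σt σf φ) (instF σt σf ψ) := by simp [instF]
@[simp] lemma instF_box (e : PTrm VA VP) (φ : PFml VA VP) :
    instF σt σf (.box e φ) = .box (instT σt σf e) (instF σt σf φ) := by simp [instF]
@[simp] lemma instT_tv (a : VA) : instT σt σf (.tv a) = σt a := by simp [instT]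
@[simp] lemma instT_comp (e f : PTrm VA VP) :
    instT σt σf (.comp e f) = .comp (instT σt σf e) (instT σt σf f) := by simp [instT]
@[simp] lemma instT_union (e f : PTrm VA VP) :
    instT σt σf (.union e f) = .union (instT σt σf e) (instT σt σf f) := by simp [instT]
@[simp] lemma instT_plus (e : PTrm VA VP) :
    instT σt σf (.plus e) = .plus (instT σt σf e) := by simp [instT]
@[simp] lemma instT_test (φ : PFml VA VP) :
    instT σt σf (.test φ) = .test (instF σt σf φ) := by simp [instT]
end InstSimp

section Derived
variable {A P : Type}

/-- The key helper: any PDL-valid scheme instantiated with actual formulas/terms as atoms. -/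
lemma hp (φ : PFml (Trm A P) (Fml A P))
    (h : ∀ (W : Type) (S : GStruct (Trm A P) (Fml A P) W), Nonempty W →
      (∀ x y, S.U x y) → ∀ x, psemF S φ x) : HProof (instF id id φ) :=
  HProof.pdl φ h id id

lemma hiff_refl (φ : Fml A P) : HProof (Fml.iff φ φ) := by
  simpa using hp (PFml.iff (.pv φ) (.pv φ)) (by intro W S _ _ x; simp)

lemma hiff_symm {φ ψ : Fml A P} (h : HProof (Fml.iff φ ψ)) : HProof (Fml.iff ψ φ) := by
  refine h.mp ?_
  simpa using hp (.imp (PFml.iff (.pv φ) (.pv ψ)) (PFml.iff (.pv ψ) (.pv φ)))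
    (by intro W S _ _ x; simp <;> tauto)

lemma hiff_trans {φ ψ χ : Fml A P} (h1 : HProof (Fml.iff φ ψ)) (h2 : HProof (Fml.iff ψ χ)) :
    HProof (Fml.iff φ χ) := by
  refine h2.mp (h1.mp ?_)
  simpa using hp (.imp (PFml.iff (.pv φ) (.pv ψ))
      (.imp (PFml.iff (.pv ψ) (.pv χ)) (PFml.iff (.pv φ) (.pv χ))))
    (by intro W S _ _ x; simp <;> tauto)

lemma hiff_intro {φ ψ : Fml A P} (h1 : HProof (.imp φ ψ)) (h2 : HProof (.imp ψ φ)) :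
    HProof (Fml.iff φ ψ) := by
  refine h2.mp (h1.mp ?_)
  simpa using hp (.imp (.imp (.pv φ) (.pv ψ)) (.imp (.imp (.pv ψ) (.pv φ))
      (PFml.iff (.pv φ) (.pv ψ))))
    (by intro W S _ _ x; simp <;> tauto)

lemma hiff_mp {φ ψ : Fml A P} (h : HProof (Fml.iff φ ψ)) : HProof (.imp φ ψ) := by
  refine h.mp ?_
  simpa using hp (.imp (PFml.iff (.pv φ) (.pv ψ)) (.imp (.pv φ) (.pv ψ)))
    (by intro W S _ _ x; simp <;> tauto)

lemma hiff_mpr {φ ψ : Fml A P} (h : HProof (Fml.iff φ ψ)) : HProof (.imp ψ φ) :=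
  hiff_mp (hiff_symm h)

lemma himp_trans {φ ψ χ : Fml A P} (h1 : HProof (.imp φ ψ)) (h2 : HProof (.imp ψ χ)) :
    HProof (.imp φ χ) := by
  refine h2.mp (h1.mp ?_)
  simpa using hp (.imp (.imp (.pv φ) (.pv ψ)) (.imp (.imp (.pv ψ) (.pv χ))
      (.imp (.pv φ) (.pv χ))))
    (by intro W S _ _ x; simp <;> tauto)

lemma hiff_congr_imp {φ φ' ψ ψ' : Fml A P} (h1 : HProof (Fml.iff φ φ'))
    (h2 : HProof (Fml.iff ψ ψ')) : HProof (Fml.iff (.imp φ ψ) (.imp φ' ψ')) := by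
  refine h2.mp (h1.mp ?_)
  simpa using hp (.imp (PFml.iff (.pv φ) (.pv φ')) (.imp (PFml.iff (.pv ψ) (.pv ψ'))
      (PFml.iff (.imp (.pv φ) (.pv ψ)) (.imp (.pv φ') (.pv ψ')))))
    (by intro W S _ _ x; simp <;> tauto)

lemma hiff_congr_and {φ φ' ψ ψ' : Fml A P} (h1 : HProof (Fml.iff φ φ'))
    (h2 : HProof (Fml.iff ψ ψ')) : HProof (Fml.iff (Fml.and φ ψ) (Fml.and φ' ψ')) := by
  refine h2.mp (h1.mp ?_)
  simpa using hp (.imp (PFml.iff (.pv φ) (.pv φ')) (.imp (PFml.iff (.pv ψ) (.pv ψ'))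
      (PFml.iff (PFml.and (.pv φ) (.pv ψ)) (PFml.and (.pv φ') (.pv ψ')))))
    (by intro W S _ _ x; simp <;> tauto)

lemma hbox_congr (e : Trm A P) {φ ψ : Fml A P} (h : HProof (Fml.iff φ ψ)) :
    HProof (Fml.iff (.box e φ) (.box e ψ)) := by
  refine (HProof.nec e h).mp ?_
  have := hp (.imp (.box (.tv e) (PFml.iff (.pv φ) (.pv ψ)))
      (PFml.iff (.box (.tv e) (.pv φ)) (.box (.tv e) (.pv ψ))))
    (by
      intro W S _ _ x; simp
      intro h1
      constructor
      · intro h2 y hy; exact (h1 y hy).1 (h2 y hy)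
      · intro h2 y hy; exact (h1 y hy).2 (h2 y hy))
  simpa using this

lemma htest_congr {φ ψ : Fml A P} (χ : Fml A P) (h : HProof (Fml.iff φ ψ)) :
    HProof (Fml.iff (.box (.test φ) χ) (.box (.test ψ) χ)) := by
  refine h.mp ?_
  have := hp (.imp (PFml.iff (.pv φ) (.pv ψ))
      (PFml.iff (.box (.test (.pv φ)) (.pv χ)) (.box (.test (.pv ψ)) (.pv χ))))
    (by intro W S _ _ x; simp <;> tauto)
  simpa using this

lemma hboxComp (e f : Trm A P) (χ : Fml A P) :
    HProof (Fml.iff (.box (.comp e f) χ) (.box e (.box f χ))) := by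
  have := hp (PFml.iff (.box (.comp (.tv e) (.tv f)) (.pv χ))
      (.box (.tv e) (.box (.tv f) (.pv χ))))
    (by
      intro W S _ _ x; simp
      constructor
      · intro h u hu v hv; exact h v u hu hv
      · intro h v u hu hv; exact h u hu v hv)
  simpa using this

lemma hboxUnion (e f : Trm A P) (χ : Fml A P) :
    HProof (Fml.iff (.box (.union e f) χ) (Fml.and (.box e χ) (.box f χ))) := by
  have := hp (PFml.iff (.box (.union (.tv e) (.tv f)) (.pv χ))
      (PFml.and (.box (.tv e) (.pv χ)) (.box (.tv f) (.pv χ))))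
    (by
      intro W S _ _ x; simp
      constructor
      · intro h; exact ⟨fun y hy => h y (Or.inl hy), fun y hy => h y (Or.inr hy)⟩
      · rintro ⟨h1, h2⟩ y (hy | hy); exacts [h1 y hy, h2 y hy])
  simpa using this

lemma hboxTest (φ χ : Fml A P) :
    HProof (Fml.iff (.box (.test φ) χ) (.imp φ χ)) := by
  have := hp (PFml.iff (.box (.test (.pv φ)) (.pv χ)) (.imp (.pv φ) (.pv χ)))
    (by intro W S _ _ x; simp <;> tauto)
  simpa using this

lemma hboxTestAnd (φ ψ χ : Fml A P) :
    HProof (Fml.iff (.box (.test (Fml.and φ ψ)) χ) (.box (.test φ) (.box (.test ψ) χ))) := by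
  have := hp (PFml.iff (.box (.test (PFml.and (.pv φ) (.pv ψ))) (.pv χ))
      (.box (.test (.pv φ)) (.box (.test (.pv ψ)) (.pv χ))))
    (by intro W S _ _ x; simp <;> tauto)
  simpa using this

lemma hboxTestOr (φ ψ χ : Fml A P) :
    HProof (Fml.iff (.box (.test (Fml.or φ ψ)) χ)
      (Fml.and (.box (.test φ) χ) (.box (.test ψ) χ))) := by
  have := hp (PFml.iff (.box (.test (PFml.or (.pv φ) (.pv ψ))) (.pv χ))
      (PFml.and (.box (.test (.pv φ)) (.pv χ)) (.box (.test (.pv ψ)) (.pv χ))))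
    (by intro W S _ _ x; simp <;> tauto)
  simpa using this

lemma hboxTestFls (χ : Fml A P) :
    HProof (Fml.iff (.box (.test .fls) χ) Fml.tru) := by
  have := hp (PFml.iff (.box (.test .fls) (.pv χ)) PFml.tru)
    (by intro W S _ _ x; simp)
  simpa using this

lemma hK (e : Trm A P) (φ ψ : Fml A P) :
    HProof (.imp (.box e (.imp φ ψ)) (.imp (.box e φ) (.box e ψ))) := by
  have := hp (.imp (.box (.tv e) (.imp (.pv φ) (.pv ψ)))
      (.imp (.box (.tv e) (.pv φ)) (.box (.tv e) (.pv ψ))))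
    (by intro W S _ _ x; simp; intro h1 h2 y hy; exact h1 y hy (h2 y hy))
  simpa using this

lemma hbox_mono (e : Trm A P) {φ ψ : Fml A P} (h : HProof (.imp φ ψ)) :
    HProof (.imp (.box e φ) (.box e ψ)) :=
  (HProof.nec e h).mp (hK e φ ψ)

lemma hind (a : Trm A P) (ψ : Fml A P) :
    HProof (.imp (.box a ψ) (.imp (.box (.plus a) (.imp ψ (.box a ψ))) (.box (.plus a) ψ))) := by
  have := hp (.imp (.box (.tv a) (.pv ψ)) (.imp (.box (.plus (.tv a))
      (.imp (.pv ψ) (.box (.tv a) (.pv ψ)))) (.box (.plus (.tv a)) (.pv ψ))))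
    (by
      intro W S _ _ x; simp
      intro h1 h2 y hy
      induction hy with
      | single h => exact h1 _ h
      | tail hxy hyz ih => exact h2 _ hxy ih _ hyz)
  simpa using this

lemma hunfold (b : Trm A P) (χ : Fml A P) :
    HProof (.imp (.box (.plus b) χ) (.box b (Fml.and χ (.box (.plus b) χ)))) := by
  have := hp (.imp (.box (.plus (.tv b)) (.pv χ))
      (.box (.tv b) (PFml.and (.pv χ) (.box (.plus (.tv b)) (.pv χ)))))
    (by
      intro W S _ _ x; simp
      intro h y hy
      exact ⟨h y (.single hy), fun z hz => h z (.head hy hz)⟩)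
  simpa using this

lemma hand_elim_r (φ ψ : Fml A P) : HProof (.imp (Fml.and φ ψ) ψ) := by
  have := hp (.imp (PFml.and (.pv φ) (.pv ψ)) (.pv ψ))
    (by intro W S _ _ x; simp <;> tauto)
  simpa using this

lemma hand_elim_l (φ ψ : Fml A P) : HProof (.imp (Fml.and φ ψ) φ) := by
  have := hp (.imp (PFml.and (.pv φ) (.pv ψ)) (.pv φ))
    (by intro W S _ _ x; simp <;> tauto)
  simpa using this

lemma hmp_mid {φ ψ χ : Fml A P} (h : HProof (.imp φ (.imp ψ χ))) (hψ : HProof ψ) :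
    HProof (.imp φ χ) := by
  have sw := hp (.imp (.imp (.pv φ) (.imp (.pv ψ) (.pv χ)))
      (.imp (.pv ψ) (.imp (.pv φ) (.pv χ))))
    (by intro W S _ _ x; simp <;> tauto)
  simp at sw
  exact hψ.mp (h.mp sw)

/-- Box-equivalence of two terms, provably, at every formula. -/
def BoxEquiv (g g' : Trm A P) : Prop :=
  ∀ χ : Fml A P, HProof (Fml.iff (.box g χ) (.box g' χ))

lemma BoxEquiv.symm {g g' : Trm A P} (h : BoxEquiv g g') : BoxEquiv g' g :=
  fun χ => hiff_symm (h χ)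

lemma comp_congr {g g' h h' : Trm A P} (hg : BoxEquiv g g') (hh : BoxEquiv h h') :
    BoxEquiv (.comp g h) (.comp g' h') := by
  intro χ
  refine hiff_trans (hboxComp g h χ) (hiff_trans ?_ (hiff_symm (hboxComp g' h' χ)))
  exact hiff_trans (hg (.box h χ)) (hbox_congr g' (hh χ))

lemma union_congr {g g' h h' : Trm A P} (hg : BoxEquiv g g') (hh : BoxEquiv h h') :
    BoxEquiv (.union g h) (.union g' h') := by
  intro χ
  refine hiff_trans (hboxUnion g h χ) (hiff_trans ?_ (hiff_symm (hboxUnion g' h' χ)))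
  exact hiff_congr_and (hg χ) (hh χ)

lemma plus_imp {a b : Trm A P} (hab : BoxEquiv a b) (χ : Fml A P) :
    HProof (.imp (.box (.plus b) χ) (.box (.plus a) χ)) := by
  set ψ : Fml A P := Fml.and χ (.box (.plus b) χ) with hψ
  -- h2 : [b⁺]χ → [a]ψ
  have h2 : HProof (.imp (.box (.plus b) χ) (.box a ψ)) :=
    himp_trans (hunfold b χ) (hiff_mpr (hab ψ))
  -- h3 : ψ → [a]ψ
  have h3 : HProof (.imp ψ (.box a ψ)) :=
    himp_trans (hand_elim_r χ (.box (.plus b) χ)) h2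
  -- [a⁺](ψ → [a]ψ)
  have h4 : HProof (.box (.plus a) (.imp ψ (.box a ψ))) := HProof.nec _ h3
  -- [a]ψ → [a⁺]ψ
  have h5 : HProof (.imp (.box a ψ) (.box (.plus a) ψ)) := hmp_mid (hind a ψ) h4
  -- [a⁺]ψ → [a⁺]χ
  have h6 : HProof (.imp (.box (.plus a) ψ) (.box (.plus a) χ)) :=
    hbox_mono _ (hand_elim_l χ (.box (.plus b) χ))
  exact himp_trans h2 (himp_trans h5 h6)

lemma plus_congr {a b : Trm A P} (hab : BoxEquiv a b) : BoxEquiv (.plus a) (.plus b) :=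
  fun χ => hiff_intro (plus_imp hab.symm χ) (plus_imp hab χ)

end Derived

section Main
variable {A P : Type}

mutual

theorem nfCorrect : ∀ φ : Fml A P, HProof (Fml.iff (NF φ) φ)
  | .pv _ => hiff_refl _
  | .fls => hiff_refl _
  | .imp φ ψ => by
      simp only [NF]
      exact hiff_congr_imp (nfCorrect φ) (nfCorrect ψ)
  | .box e φ => by
      simp only [NF]
      have h1 : HProof (Fml.iff (.box e φ) (.box (.union (.capId e) (.capNid e)) φ)) :=
        HProof.split e φ
      have h2 := hboxUnion (Trm.capId e) (Trm.capNid e) φ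
      have h3 : HProof (Fml.iff (.box (.capId e) φ) (.imp (N1 e) φ)) :=
        hiff_trans (hiff_symm (n1Correct e φ)) (hboxTest (N1 e) φ)
      have h4 : HProof (Fml.iff (.box (.capNid e) φ) (.box (N2 e) φ)) :=
        hiff_symm (n2Correct e φ)
      have h5 := hiff_congr_and h3 h4
      have hφ := hiff_symm (nfCorrect φ)
      have h6 := hiff_congr_and (hiff_congr_imp (hiff_refl (N1 e)) hφ) (hbox_congr (N2 e) hφ)
      exact hiff_symm (hiff_trans h1 (hiff_trans h2 (hiff_trans h5 h6)))

theorem n1Correct : ∀ (e : Trm A P) (χ : Fml A P),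
    HProof (Fml.iff (.box (.test (N1 e)) χ) (.box (.capId e) χ))
  | .tv a, χ => by
      simp only [N1]
      exact hiff_symm (HProof.capIdT (.tv a) χ)
  | .comp e f, χ => by
      simp only [N1]
      have h1 := hboxTestAnd (N1 e) (N1 f) χ
      have h2 := n1Correct e (.box (.test (N1 f)) χ)
      have h3 := hbox_congr (Trm.capId e) (n1Correct f χ)
      have h4 := hiff_symm (hboxComp (.capId e) (.capId f) χ)
      have h5 := hiff_symm (HProof.capIdComp e f χ)
      exact hiff_trans h1 (hiff_trans h2 (hiff_trans h3 (hiff_trans h4 h5)))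
  | .union e f, χ => by
      simp only [N1]
      have h1 := hboxTestOr (N1 e) (N1 f) χ
      have h2 := hiff_congr_and (n1Correct e χ) (n1Correct f χ)
      have h3 := hiff_symm (hboxUnion (.capId e) (.capId f) χ)
      have h4 := hiff_symm (HProof.capIdUnion e f χ)
      exact hiff_trans h1 (hiff_trans h2 (hiff_trans h3 h4))
  | .plus e, χ => by
      simp only [N1]
      exact hiff_trans (n1Correct e χ) (hiff_symm (HProof.capIdPlus e χ))
  | .adom e, χ => by
      simp only [N1]
      have c1 : HProof (Fml.iff (.box e .fls)
          (Fml.and (.box (.capId e) .fls) (.box (.capNid e) .fls))) :=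
        hiff_trans (HProof.split e .fls) (hboxUnion _ _ .fls)
      have c2 : HProof (Fml.iff (.box (.capId e) .fls) (Fml.neg (N1 e))) :=
        hiff_trans (hiff_symm (n1Correct e .fls)) (hboxTest (N1 e) .fls)
      have c3 : HProof (Fml.iff (.box (.capNid e) .fls) (.box (N2 e) .fls)) :=
        hiff_symm (n2Correct e .fls)
      have c := hiff_symm (hiff_trans c1 (hiff_congr_and c2 c3))
      exact hiff_trans (htest_congr χ c)
        (hiff_trans (hiff_symm (HProof.adomAx e χ)) (hiff_symm (HProof.capIdAdom e χ)))
  | .capId e, χ => by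
      simp only [N1]
      exact hiff_trans (n1Correct e χ) (hiff_symm (HProof.capIdCapId e χ))
  | .capNid e, χ => by
      simp only [N1]
      exact hiff_trans (hboxTestFls χ) (hiff_symm (HProof.capIdCapNid e χ))
  | .test φ, χ => by
      simp only [N1]
      exact hiff_trans (htest_congr χ (nfCorrect φ)) (hiff_symm (HProof.capIdTest φ χ))

theorem n2Correct : ∀ (e : Trm A P) (χ : Fml A P),
    HProof (Fml.iff (.box (N2 e) χ) (.box (.capNid e) χ))
  | .tv _, χ => by
      simp only [N2]
      exact hiff_refl _
  | .comp e f, χ => by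
      simp only [N2]
      have be : BoxEquiv (N2 e) (.capNid e) := fun ψ => n2Correct e ψ
      have bf : BoxEquiv (N2 f) (.capNid f) := fun ψ => n2Correct f ψ
      have te : BoxEquiv (.test (N1 e)) (.capId e) := fun ψ => n1Correct e ψ
      have tf : BoxEquiv (.test (N1 f)) (.capId f) := fun ψ => n1Correct f ψ
      have h := union_congr (union_congr (comp_congr be tf) (comp_congr te bf))
        (comp_congr be bf) χ
      exact hiff_trans h (hiff_symm (HProof.capNidComp e f χ))
  | .union e f, χ => by
      simp only [N2]
      have h := union_congr (fun ψ => n2Correct e ψ) (fun ψ => n2Correct f ψ) χ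
      exact hiff_trans h (hiff_symm (HProof.capNidUnion e f χ))
  | .plus e, χ => by
      simp only [N2]
      have h := plus_congr (fun ψ => n2Correct e ψ) χ
      exact hiff_trans h (hiff_symm (HProof.capNidPlus e χ))
  | .adom e, χ => by
      simp only [N2]
      exact hiff_trans (hboxTestFls χ) (hiff_symm (HProof.capNidAdom e χ))
  | .capId e, χ => by
      simp only [N2]
      exact hiff_trans (hboxTestFls χ) (hiff_symm (HProof.capNidCapId e χ))
  | .capNid e, χ => by
      simp only [N2]
      exact hiff_trans (n2Correct e χ) (hiff_symm (HProof.capNidCapNid e χ))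
  | .test φ, χ => by
      simp only [N2]
      exact hiff_trans (hboxTestFls χ) (hiff_symm (HProof.capNidTest φ χ))

end

end Main

theorem normal_form_provable {A P : Type} :
    (∀ φ : Fml A P, HProof (Fml.iff (NF φ) φ)) ∧
    (∀ (e : Trm A P) (χ : Fml A P),
      HProof (Fml.iff (.box (.test (N1 e)) χ) (.box (.capId e) χ))) ∧
    (∀ (e : Trm A P) (χ : Fml A P),
      HProof (Fml.iff (.box (N2 e) χ) (.box (.capNid e) χ))) := by
  exact ⟨nfCorrect, n1Correct, n2Correct⟩
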